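/- There exists ε < 1/2 and a one-way probabilistic one-counter automaton (1P1CA) over the alphabet {a,b,c,d,e} that recognizes the language L = (complement of EQ* within {a,b}*) ∪ EQ³ with negative one-sided error bound ε: every string in L is accepted with probability 1, and every string over {a,b,c,d,e} not in L is accepted with probability at most ε. -/

import Mathlib

/-- Input symbols extended with the left (`cent`) and right (`dollar`) end-markers. -/
inductive TSym (α : Type) : Type
  | cent : TSym α
  | letter : α → TSym α
  | dollar : TSym α

/-- The tape content `¢ w $` for an input word `w`. -/
def tagged {α : Type} (w : List α) : List (TSym α) :=
  TSym.cent :: (w.map TSym.letter ++ [TSym.dollar])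

/-- A one-way probabilistic one-counter automaton (with accepting states). -/
structure OneP1CA (α : Type) where
  Q : Type
  [fintypeQ : Fintype Q]
  [decQ : DecidableEq Q]
  q0 : Q
  acc : Finset Q
  m : ℕ
  δ : Q → TSym α → Bool → Q → ℤ → ℝ
  nonneg : ∀ q σ z q' c, 0 ≤ δ q σ z q' c
  support : ∀ q σ z q' c, δ q σ z q' c ≠ 0 → |c| ≤ (m : ℤ)
  total : ∀ q σ z, (∑ q' : Q, ∑ c ∈ Finset.Icc (-(m : ℤ)) (m : ℤ), δ q σ z q' c) = 1

attribute [instance] OneP1CA.fintypeQ OneP1CA.decQ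

namespace OneP1CA

variable {α : Type} (M : OneP1CA α)

/-- One step of the evolution of the probability distribution over configurations. -/
noncomputable def stepD (μ : M.Q × ℤ → ℝ) (σ : TSym α) : M.Q × ℤ → ℝ :=
  fun p' => ∑ q : M.Q, ∑ c ∈ Finset.Icc (-(M.m : ℤ)) (M.m : ℤ),
    μ (q, p'.2 - c) * M.δ q σ (decide (p'.2 - c = 0)) p'.1 c

/-- Initial distribution: point mass on `(q0, 0)`. -/
def initD : M.Q × ℤ → ℝ := fun p => if p = (M.q0, 0) then 1 else 0

/-- Distribution over configurations after reading `¢ w $`. -/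
noncomputable def finalD (w : List α) : M.Q × ℤ → ℝ := (tagged w).foldl M.stepD M.initD

/-- Acceptance probability: total probability of computation paths ending in an
accepting state after reading `¢ w $`. -/
noncomputable def accProb (w : List α) : ℝ :=
  ∑' p : M.Q × ℤ, if p.1 ∈ M.acc then M.finalD w p else 0

end OneP1CA

/-- The alphabet `{a, b, c, d, e}`. -/
inductive Γ5 : Type
  | a : Γ5
  | b : Γ5
  | c : Γ5
  | d : Γ5
  | e : Γ5
deriving DecidableEq

/-- The language `EQ = { a^n b^n : n > 0 }` over `{a,b,c,d,e}`. -/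
def EQab : Language Γ5 :=
  {w | ∃ n : ℕ, 0 < n ∧ w = List.replicate n Γ5.a ++ List.replicate n Γ5.b}

/-- The Kleene closure `EQ*`. -/
def EQabStar : Language Γ5 := KStar.kstar EQab

/-- The complement of `EQ*` within `{a,b}*`. -/
def coEQstar : Set (List Γ5) :=
  {w | (∀ x ∈ w, x = Γ5.a ∨ x = Γ5.b) ∧ w ∉ EQabStar}

/-- The language `EQ³ = { c^n d^n e^n : n ≥ 0 }`. -/
def EQ3 : Set (List Γ5) :=
  {w | ∃ n : ℕ, w = List.replicate n Γ5.c ++ List.replicate n Γ5.d ++ List.replicate n Γ5.e}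

/-- The language `L = (complement of EQ* within {a,b}*) ∪ EQ³`. -/
def LangL : Set (List Γ5) := coEQstar ∪ EQ3

inductive Ph : Type
  | start | sA | sB | fail | sC | sD | sE | dead | acc
deriving DecidableEq

instance : Fintype Ph :=
  ⟨⟨↑[Ph.start, Ph.sA, Ph.sB, Ph.fail, Ph.sC, Ph.sD, Ph.sE, Ph.dead, Ph.acc], by decide⟩,
    fun x => by cases x <;> decide⟩

def wC : Fin 3 → ℤ := ![1, 0, 1]
def wD : Fin 3 → ℤ := ![-1, 1, 0]
def wE : Fin 3 → ℤ := ![0, -1, -1]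

def g (i : Fin 3) (p : Ph) (x : Γ5) (z : Bool) : Ph × ℤ :=
  match p, x with
  | .start, .a => (.sA, 1)
  | .start, .b => (.fail, 0)
  | .start, .c => (.sC, wC i)
  | .start, .d => (.sD, wD i)
  | .start, .e => (.sE, wE i)
  | .sA, .a => (.sA, 1)
  | .sA, .b => (.sB, -1)
  | .sA, .c => (.dead, 0)
  | .sA, .d => (.dead, 0)
  | .sA, .e => (.dead, 0)
  | .sB, .a => if z then (.sA, 1) else (.fail, 0)
  | .sB, .b => if z then (.fail, 0) else (.sB, -1)
  | .sB, .c => (.dead, 0)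
  | .sB, .d => (.dead, 0)
  | .sB, .e => (.dead, 0)
  | .fail, .a => (.fail, 0)
  | .fail, .b => (.fail, 0)
  | .fail, .c => (.dead, 0)
  | .fail, .d => (.dead, 0)
  | .fail, .e => (.dead, 0)
  | .sC, .c => (.sC, wC i)
  | .sC, .d => (.sD, wD i)
  | .sC, .e => (.sE, wE i)
  | .sC, .a => (.dead, 0)
  | .sC, .b => (.dead, 0)
  | .sD, .d => (.sD, wD i)
  | .sD, .e => (.sE, wE i)
  | .sD, .a => (.dead, 0)
  | .sD, .b => (.dead, 0)
  | .sD, .c => (.dead, 0)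
  | .sE, .e => (.sE, wE i)
  | .sE, .a => (.dead, 0)
  | .sE, .b => (.dead, 0)
  | .sE, .c => (.dead, 0)
  | .sE, .d => (.dead, 0)
  | .dead, _ => (.dead, 0)
  | .acc, _ => (.dead, 0)

def gd : Ph → Bool → Ph
  | .start, _ => .acc
  | .sA, _ => .acc
  | .sB, true => .dead
  | .sB, false => .acc
  | .fail, _ => .acc
  | .sC, true => .acc
  | .sC, false => .dead
  | .sD, true => .acc
  | .sD, false => .dead
  | .sE, true => .acc
  | .sE, false => .dead
  | _, _ => .dead

lemma g_bound (i : Fin 3) (p : Ph) (x : Γ5) (z : Bool) : |(g i p x z).2| ≤ 1 := by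
  fin_cases i <;> cases p <;> cases x <;> cases z <;> decide

def F (i : Fin 3) (p : Ph) : TSym Γ5 → Bool → Ph × ℤ
  | .cent, _ => (.dead, 0)
  | .letter x, z => g i p x z
  | .dollar, z => (gd p z, 0)

lemma F_bound (i : Fin 3) (p : Ph) (σ : TSym Γ5) (z : Bool) : |(F i p σ z).2| ≤ 1 := by
  cases σ with
  | cent => simp [F]
  | letter x => exact g_bound i p x z
  | dollar => simp [F]

abbrev QM : Type := Option (Fin 3 × Ph)

noncomputable def Mδ : QM → TSym Γ5 → Bool → QM → ℤ → ℝ := fun q σ z q' c =>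
  match q with
  | none =>
    match σ with
    | .cent => if c = 0 ∧ (q' = some (0, Ph.start) ∨ q' = some (1, Ph.start) ∨ q' = some (2, Ph.start)) then 1/3 else 0
    | _ => if q' = none ∧ c = 0 then 1 else 0
  | some (i, p) => if q' = some (i, (F i p σ z).1) ∧ c = (F i p σ z).2 then 1 else 0

lemma hsum_ind (t : QM) (γ : ℤ) (hγ : γ ∈ Finset.Icc (-1 : ℤ) 1) :
    (∑ q' : QM, ∑ c ∈ Finset.Icc (-1 : ℤ) 1, (if q' = t ∧ c = γ then (1:ℝ) else 0)) = 1 := by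
  have h1 : ∀ q' : QM, (∑ c ∈ Finset.Icc (-1 : ℤ) 1, (if q' = t ∧ c = γ then (1:ℝ) else 0))
      = if q' = t then 1 else 0 := by
    intro q'
    by_cases h : q' = t <;> simp [h, Finset.sum_ite_eq', hγ]
  rw [Finset.sum_congr rfl fun q' _ => h1 q']
  simp [Finset.sum_ite_eq']

lemma Mδ_total (q : QM) (σ : TSym Γ5) (z : Bool) :
    (∑ q' : QM, ∑ c ∈ Finset.Icc (-1 : ℤ) 1, Mδ q σ z q' c) = 1 := by
  match q with
  | some (i, p) =>
    have hb := abs_le.mp (F_bound i p σ z)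
    have hr : ∀ q' c, Mδ (some (i,p)) σ z q' c
        = if q' = some (i, (F i p σ z).1) ∧ c = (F i p σ z).2 then (1:ℝ) else 0 := fun _ _ => rfl
    simp only [hr]
    exact hsum_ind _ _ (Finset.mem_Icc.mpr hb)
  | none =>
    cases σ with
    | cent =>
      have h1 : ∀ q' : QM, (∑ c ∈ Finset.Icc (-1 : ℤ) 1, Mδ none TSym.cent z q' c)
          = if q' = some (0, Ph.start) ∨ q' = some (1, Ph.start) ∨ q' = some (2, Ph.start) then (1/3 : ℝ) else 0 := by
        intro q'
        by_cases h : q' = some (0, Ph.start) ∨ q' = some (1, Ph.start) ∨ q' = some (2, Ph.start) <;>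
          simp [Mδ, h, Finset.sum_ite_eq]
      rw [Finset.sum_congr rfl fun q' _ => h1 q']
      have h2 : ∀ q' : QM, (if q' = some (0, Ph.start) ∨ q' = some (1, Ph.start) ∨ q' = some (2, Ph.start) then (1/3 : ℝ) else 0)
          = (if q' = some (0, Ph.start) then (1/3:ℝ) else 0) + (if q' = some (1, Ph.start) then (1/3:ℝ) else 0)
            + (if q' = some (2, Ph.start) then (1/3:ℝ) else 0) := by
        intro q'
        by_cases h0 : q' = some (0, Ph.start) <;> by_cases hh1 : q' = some (1, Ph.start) <;>
          by_cases h2 : q' = some (2, Ph.start) <;> simp_all <;> norm_num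
      rw [Finset.sum_congr rfl fun q' _ => h2 q']
      rw [Finset.sum_add_distrib, Finset.sum_add_distrib]
      simp [Finset.sum_ite_eq']
      norm_num
    | letter x =>
      have hr : ∀ q' c, Mδ none (TSym.letter x) z q' c = if q' = none ∧ c = (0:ℤ) then (1:ℝ) else 0 := fun _ _ => rfl
      simp only [hr]
      exact hsum_ind none 0 (by simp)
    | dollar =>
      have hr : ∀ q' c, Mδ none TSym.dollar z q' c = if q' = none ∧ c = (0:ℤ) then (1:ℝ) else 0 := fun _ _ => rfl
      simp only [hr]
      exact hsum_ind none 0 (by simp)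

lemma Mδ_nonneg (q : QM) (σ : TSym Γ5) (z : Bool) (q' : QM) (c : ℤ) : 0 ≤ Mδ q σ z q' c := by
  unfold Mδ
  match q with
  | none => cases σ <;> dsimp only <;> split <;> norm_num
  | some (i, p) => dsimp only; split <;> norm_num

lemma Mδ_support (q : QM) (σ : TSym Γ5) (z : Bool) (q' : QM) (c : ℤ) (h : Mδ q σ z q' c ≠ 0) :
    |c| ≤ (1 : ℤ) := by
  unfold Mδ at h
  match q with
  | none =>
    cases σ <;> dsimp only at h <;> rw [ne_eq, ite_eq_right_iff] at h <;> push_neg at h <;>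
      obtain ⟨h1, -⟩ := h
    · rcases h1 with ⟨hc, -⟩; simp [hc]
    · rcases h1 with ⟨-, hc⟩; simp [hc]
    · rcases h1 with ⟨-, hc⟩; simp [hc]
  | some (i, p) =>
    dsimp only at h
    rw [ne_eq, ite_eq_right_iff] at h
    push_neg at h
    rcases h with ⟨⟨_, hc⟩, _⟩
    rw [hc]; exact F_bound i p σ z


@[reducible] noncomputable def MM : OneP1CA Γ5 where
  Q := QM
  q0 := none
  acc := {some (0, Ph.acc), some (1, Ph.acc), some (2, Ph.acc)}
  m := 1
  δ := Mδ
  nonneg := Mδ_nonneg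
  support := fun q σ z q' c h => by simpa using Mδ_support q σ z q' c h
  total := fun q σ z => by simpa using Mδ_total q σ z

def pm (x : QM × ℤ) : QM × ℤ → ℝ := fun p => if p = x then 1 else 0

lemma stepD_pm (x : QM × ℤ) (σ : TSym Γ5) :
    MM.stepD (pm x) σ = fun p' =>
      if p'.2 - x.2 ∈ Finset.Icc (-1:ℤ) 1 then Mδ x.1 σ (decide (x.2 = 0)) p'.1 (p'.2 - x.2) else 0 := by
  funext p'
  show (∑ q : QM, ∑ c ∈ Finset.Icc (-((1:ℕ):ℤ)) ((1:ℕ):ℤ),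
      pm x (q, p'.2 - c) * Mδ q σ (decide (p'.2 - c = 0)) p'.1 c) = _
  have hIcc : Finset.Icc (-((1:ℕ):ℤ)) ((1:ℕ):ℤ) = Finset.Icc (-1:ℤ) 1 := by norm_num
  rw [hIcc]
  have key : ∀ q ∈ (Finset.univ : Finset QM), ∀ c ∈ Finset.Icc (-1:ℤ) 1,
      pm x (q, p'.2 - c) * Mδ q σ (decide (p'.2 - c = 0)) p'.1 c
      = if q = x.1 then (if c = p'.2 - x.2 then Mδ x.1 σ (decide (x.2 = 0)) p'.1 c else 0) else 0 := by
    intro q _ c _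
    by_cases h1 : q = x.1
    · by_cases h2 : c = p'.2 - x.2
      · subst h1; subst h2
        have hx : (x.1, p'.2 - (p'.2 - x.2)) = x := by cases x; simp
        have hz : p'.2 - (p'.2 - x.2) = x.2 := by ring
        rw [hz] at hx ⊢
        simp [pm, hx]
      · have hne : (q, p'.2 - c) ≠ x := by
          intro hq; apply h2
          have : p'.2 - c = x.2 := by rw [← hq]
          omega
        simp only [pm, if_neg hne, zero_mul, if_neg h2, if_pos h1]
    · have hne : (q, p'.2 - c) ≠ x := by
        intro hq; apply h1
        rw [← hq]
      simp only [pm, if_neg hne, zero_mul, if_neg h1]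
  rw [Finset.sum_congr rfl fun q hq => Finset.sum_congr rfl fun c hc => key q hq c hc]
  have pull : ∀ q : QM, (∑ c ∈ Finset.Icc (-1:ℤ) 1,
      if q = x.1 then (if c = p'.2 - x.2 then Mδ x.1 σ (decide (x.2 = 0)) p'.1 c else 0) else 0)
      = if q = x.1 then (if p'.2 - x.2 ∈ Finset.Icc (-1:ℤ) 1 then Mδ x.1 σ (decide (x.2 = 0)) p'.1 (p'.2 - x.2) else 0) else 0 := by
    intro q
    by_cases h1 : q = x.1 <;> simp [h1, Finset.sum_ite_eq']
  rw [Finset.sum_congr rfl fun q _ => pull q]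
  simp [Finset.sum_ite_eq']


lemma stepD_pm_det (i : Fin 3) (p : Ph) (k : ℤ) (σ : TSym Γ5) :
    MM.stepD (pm (some (i,p), k)) σ
      = pm (some (i, (F i p σ (decide (k = 0))).1), k + (F i p σ (decide (k = 0))).2) := by
  rw [stepD_pm]
  funext p'
  set t := (F i p σ (decide (k = 0))).1 with ht
  set γ := (F i p σ (decide (k = 0))).2 with hγ
  have hb : γ ∈ Finset.Icc (-1:ℤ) 1 := Finset.mem_Icc.mpr (abs_le.mp (F_bound i p σ (decide (k = 0))))
  have hδ : ∀ (q' : QM) (c : ℤ), Mδ (some (i,p)) σ (decide (k = 0)) q' c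
      = if q' = some (i, t) ∧ c = γ then (1:ℝ) else 0 := fun _ _ => rfl
  by_cases hp : p' = (some (i, t), k + γ)
  · subst hp
    simp only [hδ]
    have h2 : (some (i,t), k + γ).2 - k = γ := by simp
    rw [h2, if_pos hb]
    simp [pm]
  · rw [pm, if_neg hp]
    by_cases hin : p'.2 - k ∈ Finset.Icc (-1:ℤ) 1
    · rw [if_pos hin, hδ]
      have : ¬ (p'.1 = some (i, t) ∧ p'.2 - k = γ) := by
        intro ⟨ha, hb2⟩
        apply hp
        have : p'.2 = k + γ := by omega
        exact Prod.ext ha this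
      rw [if_neg this]
    · rw [if_neg hin]

lemma initD_eq : MM.initD = pm (none, 0) := rfl

lemma stepD_init_cent :
    MM.stepD MM.initD TSym.cent = fun p : QM × ℤ =>
      (1/3) * (pm (some (0, Ph.start), 0) p + pm (some (1, Ph.start), 0) p + pm (some (2, Ph.start), 0) p) := by
  rw [initD_eq, stepD_pm]
  funext p'
  have hδ : ∀ (z : Bool) (q' : QM) (c : ℤ), Mδ none TSym.cent z q' c
      = if c = 0 ∧ (q' = some (0, Ph.start) ∨ q' = some (1, Ph.start) ∨ q' = some (2, Ph.start))
        then (1/3:ℝ) else 0 := fun _ _ _ => rfl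
  simp only [hδ, pm]
  obtain ⟨q', k'⟩ := p'
  by_cases hk : k' = (0:ℤ)
  · subst hk
    rw [if_pos (by norm_num : (0:ℤ) - 0 ∈ Finset.Icc (-1:ℤ) 1)]
    show (if (0:ℤ) - 0 = 0 ∧ (q' = some (0, Ph.start) ∨ q' = some (1, Ph.start) ∨ q' = some (2, Ph.start))
      then (1/3:ℝ) else 0) = _
    by_cases h : q' = some (0, Ph.start) ∨ q' = some (1, Ph.start) ∨ q' = some (2, Ph.start)
    · rw [if_pos ⟨by ring, h⟩]
      rcases h with h|h|h <;> subst h <;>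
        norm_num [Prod.ext_iff, show ¬(some (0,Ph.start) : QM) = some (1,Ph.start) from by decide,
          show ¬(some (0,Ph.start) : QM) = some (2,Ph.start) from by decide,
          show ¬(some (1,Ph.start) : QM) = some (0,Ph.start) from by decide,
          show ¬(some (1,Ph.start) : QM) = some (2,Ph.start) from by decide,
          show ¬(some (2,Ph.start) : QM) = some (0,Ph.start) from by decide,
          show ¬(some (2,Ph.start) : QM) = some (1,Ph.start) from by decide]
    · rw [if_neg (fun hh => h hh.2)]
      obtain ⟨n0, h2⟩ := not_or.mp h
      obtain ⟨n1, n2⟩ := not_or.mp h2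
      simp [Prod.ext_iff, n0, n1, n2]
  · by_cases hin : (k' : ℤ) - 0 ∈ Finset.Icc (-1:ℤ) 1
    · rw [if_pos hin]
      rw [if_neg (by intro h; exact hk (by omega))]
      simp [Prod.ext_iff, hk]
    · rw [if_neg hin]
      simp [Prod.ext_iff, hk]

lemma stepD_comb (μ1 μ2 μ3 : QM × ℤ → ℝ) (σ : TSym Γ5) :
    MM.stepD (fun p => (1/3) * (μ1 p + μ2 p + μ3 p)) σ
      = fun p => (1/3) * (MM.stepD μ1 σ p + MM.stepD μ2 σ p + MM.stepD μ3 σ p) := by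
  funext p'
  show (∑ q : QM, ∑ c ∈ Finset.Icc (-((1:ℕ):ℤ)) ((1:ℕ):ℤ),
      (1/3) * (μ1 (q, p'.2 - c) + μ2 (q, p'.2 - c) + μ3 (q, p'.2 - c)) * Mδ q σ (decide (p'.2 - c = 0)) p'.1 c) = _
  have : ∀ q ∈ (Finset.univ : Finset QM), ∀ c ∈ Finset.Icc (-((1:ℕ):ℤ)) ((1:ℕ):ℤ),
      (1/3) * (μ1 (q, p'.2 - c) + μ2 (q, p'.2 - c) + μ3 (q, p'.2 - c)) * Mδ q σ (decide (p'.2 - c = 0)) p'.1 c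
      = (1/3) * (μ1 (q, p'.2 - c) * Mδ q σ (decide (p'.2 - c = 0)) p'.1 c
          + μ2 (q, p'.2 - c) * Mδ q σ (decide (p'.2 - c = 0)) p'.1 c
          + μ3 (q, p'.2 - c) * Mδ q σ (decide (p'.2 - c = 0)) p'.1 c) := by
    intro q _ c _; ring
  rw [Finset.sum_congr rfl fun q hq => Finset.sum_congr rfl fun c hc => this q hq c hc]
  simp only [← Finset.mul_sum, Finset.sum_add_distrib]
  rfl

lemma foldl_comb (l : List (TSym Γ5)) : ∀ (μ1 μ2 μ3 : QM × ℤ → ℝ),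
    l.foldl MM.stepD (fun p => (1/3) * (μ1 p + μ2 p + μ3 p))
      = fun p => (1/3) * ((l.foldl MM.stepD μ1) p + (l.foldl MM.stepD μ2) p + (l.foldl MM.stepD μ3) p) := by
  induction l with
  | nil => intro μ1 μ2 μ3; rfl
  | cons σ l ih =>
    intro μ1 μ2 μ3
    show (l.foldl MM.stepD (MM.stepD (fun p => (1/3) * (μ1 p + μ2 p + μ3 p)) σ)) = _
    rw [stepD_comb, ih]
    rfl

def dstep (i : Fin 3) (cfg : Ph × ℤ) (x : Γ5) : Ph × ℤ :=
  ((g i cfg.1 x (decide (cfg.2 = 0))).1, cfg.2 + (g i cfg.1 x (decide (cfg.2 = 0))).2)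

def runF (i : Fin 3) (cfg : Ph × ℤ) (w : List Γ5) : Ph × ℤ := w.foldl (dstep i) cfg

def runL (i : Fin 3) (w : List Γ5) : Ph × ℤ := runF i (Ph.start, 0) w

def endPh (i : Fin 3) (w : List Γ5) : Ph := gd (runL i w).1 (decide ((runL i w).2 = 0))

def eCfg (i : Fin 3) (w : List Γ5) : QM × ℤ := (some (i, endPh i w), (runL i w).2)

lemma foldl_pm_det (i : Fin 3) (w : List Γ5) : ∀ (p : Ph) (k : ℤ),
    (w.map TSym.letter ++ [TSym.dollar]).foldl MM.stepD (pm (some (i,p), k))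
      = pm (some (i, gd (runF i (p,k) w).1 (decide ((runF i (p,k) w).2 = 0))), (runF i (p,k) w).2) := by
  induction w with
  | nil =>
    intro p k
    show MM.stepD (pm (some (i,p), k)) TSym.dollar = _
    rw [stepD_pm_det]
    have : (F i p TSym.dollar (decide (k = 0))) = (gd p (decide (k = 0)), 0) := rfl
    rw [this]
    simp [runF]
    rfl
  | cons x xs ih =>
    intro p k
    show (xs.map TSym.letter ++ [TSym.dollar]).foldl MM.stepD
        (MM.stepD (pm (some (i,p), k)) (TSym.letter x)) = _
    rw [stepD_pm_det]
    have hF : (F i p (TSym.letter x) (decide (k = 0))) = g i p x (decide (k = 0)) := rfl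
    rw [hF, ih]
    have : runF i (p, k) (x :: xs) = runF i (dstep i (p,k) x) xs := rfl
    rw [this]
    rfl

lemma finalD_eq (w : List Γ5) :
    MM.finalD w = fun p : QM × ℤ => (1/3) * (pm (eCfg 0 w) p + pm (eCfg 1 w) p + pm (eCfg 2 w) p) := by
  show (TSym.cent :: (w.map TSym.letter ++ [TSym.dollar])).foldl MM.stepD MM.initD = _
  rw [List.foldl_cons]
  rw [stepD_init_cent]
  have h := foldl_comb (w.map TSym.letter ++ [TSym.dollar]) (pm (some (0,Ph.start),0))
    (pm (some (1,Ph.start),0)) (pm (some (2,Ph.start),0))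
  rw [foldl_pm_det 0 w Ph.start 0, foldl_pm_det 1 w Ph.start 0, foldl_pm_det 2 w Ph.start 0] at h
  exact h


lemma mem_acc_iff (i : Fin 3) (ph : Ph) : (some (i, ph) : QM) ∈ MM.acc ↔ ph = Ph.acc := by
  show _ ∈ ({some (0, Ph.acc), some (1, Ph.acc), some (2, Ph.acc)} : Finset QM) ↔ _
  fin_cases i <;> simp [Prod.ext_iff] <;> decide

lemma eCfg_fst_mem (i : Fin 3) (w : List Γ5) :
    ((eCfg i w).1 ∈ MM.acc) = (endPh i w = Ph.acc) := propext (mem_acc_iff i (endPh i w))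

lemma eCfg_ne (i j : Fin 3) (h : i ≠ j) (w w' : List Γ5) : eCfg i w ≠ eCfg j w' := by
  intro hh
  apply h
  have h1 := congrArg Prod.fst hh
  simp only [eCfg, Option.some.injEq, Prod.mk.injEq] at h1
  exact h1.1

lemma pointwise_acc (w : List Γ5) (p : QM × ℤ) :
    (if p.1 ∈ MM.acc then MM.finalD w p else 0)
      = (if p = eCfg 0 w then (if endPh 0 w = Ph.acc then (1/3:ℝ) else 0) else 0)
      + (if p = eCfg 1 w then (if endPh 1 w = Ph.acc then (1/3:ℝ) else 0) else 0)
      + (if p = eCfg 2 w then (if endPh 2 w = Ph.acc then (1/3:ℝ) else 0) else 0) := by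
  rw [finalD_eq]
  by_cases h0 : p = eCfg 0 w
  · subst h0
    simp only [eCfg_fst_mem]
    have n1 : eCfg 0 w ≠ eCfg 1 w := eCfg_ne 0 1 (by decide) w w
    have n2 : eCfg 0 w ≠ eCfg 2 w := eCfg_ne 0 2 (by decide) w w
    simp only [pm, if_pos rfl, if_neg n1, if_neg n2]
    split <;> rename_i hm <;> simp [eCfg] at hm <;> norm_num [hm]
  · by_cases h1 : p = eCfg 1 w
    · subst h1
      simp only [eCfg_fst_mem]
      have n0 : eCfg 1 w ≠ eCfg 0 w := eCfg_ne 1 0 (by decide) w w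
      have n2 : eCfg 1 w ≠ eCfg 2 w := eCfg_ne 1 2 (by decide) w w
      simp only [pm, if_pos rfl, if_neg n0, if_neg n2]
      split <;> rename_i hm <;> simp [eCfg] at hm <;> norm_num [hm]
    · by_cases h2 : p = eCfg 2 w
      · subst h2
        simp only [eCfg_fst_mem]
        have n0 : eCfg 2 w ≠ eCfg 0 w := eCfg_ne 2 0 (by decide) w w
        have n1 : eCfg 2 w ≠ eCfg 1 w := eCfg_ne 2 1 (by decide) w w
        simp only [pm, if_pos rfl, if_neg n0, if_neg n1]
        split <;> rename_i hm <;> simp [eCfg] at hm <;> norm_num [hm]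
      · simp only [pm, if_neg h0, if_neg h1, if_neg h2]
        split <;> norm_num

lemma accProb_eq (w : List Γ5) :
    MM.accProb w = (if endPh 0 w = Ph.acc then (1/3:ℝ) else 0)
      + (if endPh 1 w = Ph.acc then (1/3:ℝ) else 0)
      + (if endPh 2 w = Ph.acc then (1/3:ℝ) else 0) := by
  have hzero : ∀ p ∉ ({eCfg 0 w, eCfg 1 w, eCfg 2 w} : Finset (QM × ℤ)),
      (if p.1 ∈ MM.acc then MM.finalD w p else 0) = 0 := by
    intro p hp
    simp only [Finset.mem_insert, Finset.mem_singleton] at hp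
    push_neg at hp
    rw [pointwise_acc, if_neg hp.1, if_neg hp.2.1, if_neg hp.2.2]
    norm_num
  have hts : MM.accProb w
      = ∑ p ∈ ({eCfg 0 w, eCfg 1 w, eCfg 2 w} : Finset (QM × ℤ)),
          (if p.1 ∈ MM.acc then MM.finalD w p else 0) := tsum_eq_sum hzero
  rw [hts]
  rw [Finset.sum_congr rfl fun p _ => pointwise_acc w p]
  rw [Finset.sum_add_distrib, Finset.sum_add_distrib]
  rw [Finset.sum_ite_eq' _ (eCfg 0 w), Finset.sum_ite_eq' _ (eCfg 1 w), Finset.sum_ite_eq' _ (eCfg 2 w)]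
  have m0 : eCfg 0 w ∈ ({eCfg 0 w, eCfg 1 w, eCfg 2 w} : Finset (QM × ℤ)) := by simp
  have m1 : eCfg 1 w ∈ ({eCfg 0 w, eCfg 1 w, eCfg 2 w} : Finset (QM × ℤ)) := by simp
  have m2 : eCfg 2 w ∈ ({eCfg 0 w, eCfg 1 w, eCfg 2 w} : Finset (QM × ℤ)) := by simp
  rw [if_pos m0, if_pos m1, if_pos m2]


def overAB (w : List Γ5) : Prop := ∀ x ∈ w, x = Γ5.a ∨ x = Γ5.b

lemma runF_append (i : Fin 3) (cfg : Ph × ℤ) (u v : List Γ5) :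
    runF i cfg (u ++ v) = runF i (runF i cfg u) v := List.foldl_append

lemma runF_rep_loop (i : Fin 3) (s : Ph) (x : Γ5) (δc : ℤ)
    (h : ∀ z, g i s x z = (s, δc)) :
    ∀ (n : ℕ) (k : ℤ), runF i (s, k) (List.replicate n x) = (s, k + n * δc) := by
  intro n
  induction n with
  | zero => intro k; simp [runF]
  | succ n ih =>
    intro k
    rw [List.replicate_succ]
    show runF i (dstep i (s,k) x) (List.replicate n x) = _
    rw [show dstep i (s,k) x = (s, k + δc) from by simp [dstep, h]]
    rw [ih]
    have : k + δc + n * δc = k + (n+1 : ℕ) * δc := by push_cast; ring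
    rw [this]

lemma runF_B_b (i : Fin 3) : ∀ (j k : ℕ), j ≤ k →
    runF i (Ph.sB, (k:ℤ)) (List.replicate j Γ5.b) = (Ph.sB, ((k - j : ℕ) : ℤ)) := by
  intro j
  induction j with
  | zero => intro k _; simp [runF]
  | succ j ih =>
    intro k hk
    rw [List.replicate_succ]
    show runF i (dstep i (Ph.sB, (k:ℤ)) Γ5.b) (List.replicate j Γ5.b) = _
    have hk0 : ¬ ((k:ℤ) = 0) := by omega
    have hd : dstep i (Ph.sB, (k:ℤ)) Γ5.b = (Ph.sB, ((k - 1 : ℕ) : ℤ)) := by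
      simp [dstep, g, hk0]
      rw [if_neg (by omega)]
      refine ⟨rfl, ?_⟩
      show (k:ℤ) + -1 = ((k - 1 : ℕ) : ℤ)
      omega
    rw [hd, ih (k-1) (by omega)]
    congr 1
    omega

lemma runF_block (i : Fin 3) (s : Ph × ℤ) (hs : s = (Ph.start, 0) ∨ s = (Ph.sB, 0))
    (n : ℕ) (hn : 0 < n) :
    runF i s (List.replicate n Γ5.a ++ List.replicate n Γ5.b) = (Ph.sB, 0) := by
  obtain ⟨m, rfl⟩ : ∃ m, n = m + 1 := ⟨n-1, by omega⟩
  rw [runF_append]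
  have h1 : runF i s (List.replicate (m+1) Γ5.a) = (Ph.sA, 1 + (m:ℤ)) := by
    rw [List.replicate_succ]
    show runF i (dstep i s Γ5.a) (List.replicate m Γ5.a) = _
    have hd : dstep i s Γ5.a = (Ph.sA, 1) := by
      rcases hs with rfl | rfl <;> simp [dstep, g]
    rw [hd, runF_rep_loop i Ph.sA Γ5.a 1 (fun z => rfl) m 1]
    simp
  rw [h1, List.replicate_succ]
  show runF i (dstep i (Ph.sA, 1 + (m:ℤ)) Γ5.b) (List.replicate m Γ5.b) = _
  have hd : dstep i (Ph.sA, 1 + (m:ℤ)) Γ5.b = (Ph.sB, (m:ℤ)) := by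
    simp [dstep, g]
  rw [hd]
  have := runF_B_b i m m le_rfl
  simpa using this

lemma run_kstar (i : Fin 3) (w : List Γ5) (hw : w ∈ EQabStar) :
    (w = [] ∧ runL i w = (Ph.start, 0)) ∨ (w ≠ [] ∧ runL i w = (Ph.sB, 0)) := by
  obtain ⟨S, rfl, hS⟩ := Language.mem_kstar.mp hw
  clear hw
  induction S using List.reverseRecOn with
  | nil => left; exact ⟨rfl, rfl⟩
  | append_singleton S y ih =>
    have hy : y ∈ EQab := hS y (by simp)
    obtain ⟨n, hn, rfl⟩ := hy
    have ih' := ih (fun z hz => hS z (by simp [hz]))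
    have hflat : (S ++ [List.replicate n Γ5.a ++ List.replicate n Γ5.b]).flatten
        = S.flatten ++ (List.replicate n Γ5.a ++ List.replicate n Γ5.b) := by
      simp
    rw [hflat]
    right
    constructor
    · intro h
      have := congrArg List.length h
      simp at this
      omega
    · rw [runL, runF_append]
      apply runF_block i _ _ n hn
      rcases ih' with ⟨-, h⟩ | ⟨-, h⟩
      · left; exact h
      · right; exact h


def RInv (i : Fin 3) (w : List Γ5) : Prop :=
    ((runL i w).1 = Ph.start → w = [] ∧ (runL i w).2 = 0) ∧
    ((runL i w).1 = Ph.sA → overAB w ∧ ∃ p n, p ∈ EQabStar ∧ 0 < n ∧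
        w = p ++ List.replicate n Γ5.a ∧ (runL i w).2 = n) ∧
    ((runL i w).1 = Ph.sB → overAB w ∧ ∃ p n j, p ∈ EQabStar ∧ 0 < j ∧ j ≤ n ∧
        w = p ++ List.replicate n Γ5.a ++ List.replicate j Γ5.b ∧ (runL i w).2 = (n:ℤ) - j) ∧
    ((runL i w).1 = Ph.fail → overAB w) ∧
    ((runL i w).1 = Ph.sC → ∃ n : ℕ, 0 < n ∧ w = List.replicate n Γ5.c ∧
        (runL i w).2 = n * wC i) ∧
    ((runL i w).1 = Ph.sD → ∃ n m : ℕ, 0 < m ∧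
        w = List.replicate n Γ5.c ++ List.replicate m Γ5.d ∧
        (runL i w).2 = n * wC i + m * wD i) ∧
    ((runL i w).1 = Ph.sE → ∃ n m l : ℕ, 0 < l ∧
        w = List.replicate n Γ5.c ++ List.replicate m Γ5.d ++ List.replicate l Γ5.e ∧
        (runL i w).2 = n * wC i + m * wD i + l * wE i)

lemma overAB_snoc {v : List Γ5} (h : overAB v) {x : Γ5} (hx : x = Γ5.a ∨ x = Γ5.b) :
    overAB (v ++ [x]) := by
  intro y hy
  rcases List.mem_append.mp hy with h1 | h1
  · exact h y h1
  · simp at h1; subst h1; exact hx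

lemma nil_mem_EQabStar : ([] : List Γ5) ∈ EQabStar :=
  Language.mem_kstar.mpr ⟨[], by simp, by simp⟩

lemma kstar_append_block (p : List Γ5) (hp : p ∈ EQabStar) (n : ℕ) (hn : 0 < n) :
    p ++ List.replicate n Γ5.a ++ List.replicate n Γ5.b ∈ EQabStar := by
  obtain ⟨S, rfl, hS⟩ := Language.mem_kstar.mp hp
  refine Language.mem_kstar.mpr ⟨S ++ [List.replicate n Γ5.a ++ List.replicate n Γ5.b], by simp, ?_⟩
  intro y hy
  rcases List.mem_append.mp hy with h1 | h1
  · exact hS y h1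
  · simp at h1; subst h1; exact ⟨n, hn, rfl⟩

set_option maxHeartbeats 3200000 in
lemma invariant (i : Fin 3) (w : List Γ5) : RInv i w := by
  induction w using List.reverseRecOn with
  | nil =>
    unfold RInv
    have hn : runL i [] = (Ph.start, 0) := rfl
    rw [hn]
    refine ⟨fun _ => ⟨rfl, rfl⟩, ?_, ?_, ?_, ?_, ?_, ?_⟩ <;> intro h <;> simp at h
  | append_singleton v x ih =>
    obtain ⟨i1, i2, i3, i4, i5, i6, i7⟩ := ih
    have hrun : runL i (v ++ [x]) = dstep i (runL i v) x := by
      rw [runL, runF, List.foldl_append]; rfl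
    rcases hs : runL i v with ⟨s, k⟩
    rw [hs] at hrun i1 i2 i3 i4 i5 i6 i7
    simp only at i1 i2 i3 i4 i5 i6 i7
    unfold RInv
    rw [hrun]
    cases s <;> cases x
    case start.a =>
      obtain ⟨hv, hk⟩ := i1 rfl
      subst hv; subst hk
      have hd : dstep i (Ph.start, 0) Γ5.a = (Ph.sA, 0 + 1) := rfl
      rw [hd]
      refine ⟨by simp, fun _ => ?_, by simp, by simp, by simp, by simp, by simp⟩
      refine ⟨by intro y hy; simp at hy; simp [hy], [], 1, nil_mem_EQabStar, one_pos, by simp, by norm_num⟩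
    case start.b =>
      obtain ⟨hv, hk⟩ := i1 rfl
      subst hv
      have hd : dstep i (Ph.start, k) Γ5.b = (Ph.fail, k + 0) := rfl
      rw [hd]
      refine ⟨by simp, by simp, by simp, fun _ => ?_, by simp, by simp, by simp⟩
      intro y hy; simp at hy; simp [hy]
    case start.c =>
      obtain ⟨hv, hk⟩ := i1 rfl
      subst hv; subst hk
      have hd : dstep i (Ph.start, 0) Γ5.c = (Ph.sC, 0 + wC i) := rfl
      rw [hd]
      refine ⟨by simp, by simp, by simp, by simp, fun _ => ?_, by simp, by simp⟩
      exact ⟨1, one_pos, by simp, by push_cast; ring⟩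
    case start.d =>
      obtain ⟨hv, hk⟩ := i1 rfl
      subst hv; subst hk
      have hd : dstep i (Ph.start, 0) Γ5.d = (Ph.sD, 0 + wD i) := rfl
      rw [hd]
      refine ⟨by simp, by simp, by simp, by simp, by simp, fun _ => ?_, by simp⟩
      exact ⟨0, 1, one_pos, by simp, by push_cast; ring⟩
    case start.e =>
      obtain ⟨hv, hk⟩ := i1 rfl
      subst hv; subst hk
      have hd : dstep i (Ph.start, 0) Γ5.e = (Ph.sE, 0 + wE i) := rfl
      rw [hd]
      refine ⟨by simp, by simp, by simp, by simp, by simp, by simp, fun _ => ?_⟩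
      exact ⟨0, 0, 1, one_pos, by simp, by push_cast; ring⟩
    case sA.a =>
      obtain ⟨hab, p, n, hp, hn, hv, hk⟩ := i2 rfl
      have hd : dstep i (Ph.sA, k) Γ5.a = (Ph.sA, k + 1) := rfl
      rw [hd]
      refine ⟨by simp, fun _ => ?_, by simp, by simp, by simp, by simp, by simp⟩
      refine ⟨overAB_snoc hab (Or.inl rfl), p, n + 1, hp, by omega, ?_, ?_⟩
      · rw [hv, List.replicate_succ', ← List.append_assoc]
      · simp only [hk]; push_cast; ring
    case sA.b =>
      obtain ⟨hab, p, n, hp, hn, hv, hk⟩ := i2 rfl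
      have hd : dstep i (Ph.sA, k) Γ5.b = (Ph.sB, k + -1) := rfl
      rw [hd]
      refine ⟨by simp, by simp, fun _ => ?_, by simp, by simp, by simp, by simp⟩
      refine ⟨overAB_snoc hab (Or.inr rfl), p, n, 1, hp, one_pos, hn, ?_, ?_⟩
      · rw [hv]; simp
      · simp only [hk]; push_cast; ring
    case sA.c =>
      have hd : dstep i (Ph.sA, k) Γ5.c = (Ph.dead, k + 0) := rfl
      rw [hd]
      exact ⟨by simp, by simp, by simp, by simp, by simp, by simp, by simp⟩
    case sA.d =>
      have hd : dstep i (Ph.sA, k) Γ5.d = (Ph.dead, k + 0) := rfl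
      rw [hd]
      exact ⟨by simp, by simp, by simp, by simp, by simp, by simp, by simp⟩
    case sA.e =>
      have hd : dstep i (Ph.sA, k) Γ5.e = (Ph.dead, k + 0) := rfl
      rw [hd]
      exact ⟨by simp, by simp, by simp, by simp, by simp, by simp, by simp⟩
    case sB.a =>
      obtain ⟨hab, p, n, j, hp, hj, hjn, hv, hk⟩ := i3 rfl
      by_cases hk0 : k = 0
      · subst hk0
        have hjn' : j = n := by omega
        subst hjn'
        have hd : dstep i (Ph.sB, 0) Γ5.a = (Ph.sA, 0 + 1) := rfl
        rw [hd]
        refine ⟨by simp, fun _ => ?_, by simp, by simp, by simp, by simp, by simp⟩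
        refine ⟨overAB_snoc hab (Or.inl rfl), p ++ List.replicate j Γ5.a ++ List.replicate j Γ5.b, 1,
          kstar_append_block p hp j hj, one_pos, ?_, by norm_num⟩
        rw [hv]; simp
  
      · have hz : decide (k = 0) = false := decide_eq_false hk0
        have hd : dstep i (Ph.sB, k) Γ5.a = (Ph.fail, k + 0) := by
          simp [dstep, g, hz]
        rw [hd]
        refine ⟨by simp, by simp, by simp, fun _ => ?_, by simp, by simp, by simp⟩
        exact overAB_snoc hab (Or.inl rfl)
  
    case sB.b =>
      obtain ⟨hab, p, n, j, hp, hj, hjn, hv, hk⟩ := i3 rfl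
      by_cases hk0 : k = 0
      · subst hk0
        have hd : dstep i (Ph.sB, 0) Γ5.b = (Ph.fail, 0 + 0) := rfl
        rw [hd]
        refine ⟨by simp, by simp, by simp, fun _ => ?_, by simp, by simp, by simp⟩
        exact overAB_snoc hab (Or.inr rfl)
  
      · have hz : decide (k = 0) = false := decide_eq_false hk0
        have hd : dstep i (Ph.sB, k) Γ5.b = (Ph.sB, k + -1) := by
          simp [dstep, g, hz]
        rw [hd]
        have hjlt : j < n := by omega
        refine ⟨by simp, by simp, fun _ => ?_, by simp, by simp, by simp, by simp⟩
        refine ⟨overAB_snoc hab (Or.inr rfl), p, n, j + 1, hp, by omega, by omega, ?_, ?_⟩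
        · rw [hv, List.replicate_succ', ← List.append_assoc]
        · simp only [hk]; push_cast; ring
  
    case sB.c =>
      have hd : dstep i (Ph.sB, k) Γ5.c = (Ph.dead, k + 0) := rfl
      rw [hd]
      exact ⟨by simp, by simp, by simp, by simp, by simp, by simp, by simp⟩
    case sB.d =>
      have hd : dstep i (Ph.sB, k) Γ5.d = (Ph.dead, k + 0) := rfl
      rw [hd]
      exact ⟨by simp, by simp, by simp, by simp, by simp, by simp, by simp⟩
    case sB.e =>
      have hd : dstep i (Ph.sB, k) Γ5.e = (Ph.dead, k + 0) := rfl
      rw [hd]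
      exact ⟨by simp, by simp, by simp, by simp, by simp, by simp, by simp⟩
    case fail.a =>
      have hab := i4 rfl
      have hd : dstep i (Ph.fail, k) Γ5.a = (Ph.fail, k + 0) := rfl
      rw [hd]
      refine ⟨by simp, by simp, by simp, fun _ => ?_, by simp, by simp, by simp⟩
      exact overAB_snoc hab (Or.inl rfl)
    case fail.b =>
      have hab := i4 rfl
      have hd : dstep i (Ph.fail, k) Γ5.b = (Ph.fail, k + 0) := rfl
      rw [hd]
      refine ⟨by simp, by simp, by simp, fun _ => ?_, by simp, by simp, by simp⟩
      exact overAB_snoc hab (Or.inr rfl)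
    case fail.c =>
      have hd : dstep i (Ph.fail, k) Γ5.c = (Ph.dead, k + 0) := rfl
      rw [hd]
      exact ⟨by simp, by simp, by simp, by simp, by simp, by simp, by simp⟩
    case fail.d =>
      have hd : dstep i (Ph.fail, k) Γ5.d = (Ph.dead, k + 0) := rfl
      rw [hd]
      exact ⟨by simp, by simp, by simp, by simp, by simp, by simp, by simp⟩
    case fail.e =>
      have hd : dstep i (Ph.fail, k) Γ5.e = (Ph.dead, k + 0) := rfl
      rw [hd]
      exact ⟨by simp, by simp, by simp, by simp, by simp, by simp, by simp⟩
    case sC.a =>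
      have hd : dstep i (Ph.sC, k) Γ5.a = (Ph.dead, k + 0) := rfl
      rw [hd]
      exact ⟨by simp, by simp, by simp, by simp, by simp, by simp, by simp⟩
    case sC.b =>
      have hd : dstep i (Ph.sC, k) Γ5.b = (Ph.dead, k + 0) := rfl
      rw [hd]
      exact ⟨by simp, by simp, by simp, by simp, by simp, by simp, by simp⟩
    case sC.c =>
      obtain ⟨n, hn, hv, hk⟩ := i5 rfl
      have hd : dstep i (Ph.sC, k) Γ5.c = (Ph.sC, k + wC i) := rfl
      rw [hd]
      refine ⟨by simp, by simp, by simp, by simp, fun _ => ?_, by simp, by simp⟩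
      refine ⟨n + 1, by omega, ?_, ?_⟩
      · rw [hv, List.replicate_succ']
      · simp only [hk]; push_cast; ring
    case sC.d =>
      obtain ⟨n, hn, hv, hk⟩ := i5 rfl
      have hd : dstep i (Ph.sC, k) Γ5.d = (Ph.sD, k + wD i) := rfl
      rw [hd]
      refine ⟨by simp, by simp, by simp, by simp, by simp, fun _ => ?_, by simp⟩
      refine ⟨n, 1, one_pos, ?_, ?_⟩
      · rw [hv]; simp
      · simp only [hk]; push_cast; ring
    case sC.e =>
      obtain ⟨n, hn, hv, hk⟩ := i5 rfl
      have hd : dstep i (Ph.sC, k) Γ5.e = (Ph.sE, k + wE i) := rfl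
      rw [hd]
      refine ⟨by simp, by simp, by simp, by simp, by simp, by simp, fun _ => ?_⟩
      refine ⟨n, 0, 1, one_pos, ?_, ?_⟩
      · rw [hv]; simp
      · simp only [hk]; push_cast; ring
    case sD.a =>
      have hd : dstep i (Ph.sD, k) Γ5.a = (Ph.dead, k + 0) := rfl
      rw [hd]
      exact ⟨by simp, by simp, by simp, by simp, by simp, by simp, by simp⟩
    case sD.b =>
      have hd : dstep i (Ph.sD, k) Γ5.b = (Ph.dead, k + 0) := rfl
      rw [hd]
      exact ⟨by simp, by simp, by simp, by simp, by simp, by simp, by simp⟩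
    case sD.c =>
      have hd : dstep i (Ph.sD, k) Γ5.c = (Ph.dead, k + 0) := rfl
      rw [hd]
      exact ⟨by simp, by simp, by simp, by simp, by simp, by simp, by simp⟩
    case sD.d =>
      obtain ⟨n, m, hm, hv, hk⟩ := i6 rfl
      have hd : dstep i (Ph.sD, k) Γ5.d = (Ph.sD, k + wD i) := rfl
      rw [hd]
      refine ⟨by simp, by simp, by simp, by simp, by simp, fun _ => ?_, by simp⟩
      refine ⟨n, m + 1, by omega, ?_, ?_⟩
      · rw [hv, List.replicate_succ', ← List.append_assoc]
      · simp only [hk]; push_cast; ring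
    case sD.e =>
      obtain ⟨n, m, hm, hv, hk⟩ := i6 rfl
      have hd : dstep i (Ph.sD, k) Γ5.e = (Ph.sE, k + wE i) := rfl
      rw [hd]
      refine ⟨by simp, by simp, by simp, by simp, by simp, by simp, fun _ => ?_⟩
      refine ⟨n, m, 1, one_pos, ?_, ?_⟩
      · rw [hv]; simp
      · simp only [hk]; push_cast; ring
    case sE.a =>
      have hd : dstep i (Ph.sE, k) Γ5.a = (Ph.dead, k + 0) := rfl
      rw [hd]
      exact ⟨by simp, by simp, by simp, by simp, by simp, by simp, by simp⟩
    case sE.b =>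
      have hd : dstep i (Ph.sE, k) Γ5.b = (Ph.dead, k + 0) := rfl
      rw [hd]
      exact ⟨by simp, by simp, by simp, by simp, by simp, by simp, by simp⟩
    case sE.c =>
      have hd : dstep i (Ph.sE, k) Γ5.c = (Ph.dead, k + 0) := rfl
      rw [hd]
      exact ⟨by simp, by simp, by simp, by simp, by simp, by simp, by simp⟩
    case sE.d =>
      have hd : dstep i (Ph.sE, k) Γ5.d = (Ph.dead, k + 0) := rfl
      rw [hd]
      exact ⟨by simp, by simp, by simp, by simp, by simp, by simp, by simp⟩
    case sE.e =>
      obtain ⟨n, m, l, hl, hv, hk⟩ := i7 rfl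
      have hd : dstep i (Ph.sE, k) Γ5.e = (Ph.sE, k + wE i) := rfl
      rw [hd]
      refine ⟨by simp, by simp, by simp, by simp, by simp, by simp, fun _ => ?_⟩
      refine ⟨n, m, l + 1, by omega, ?_, ?_⟩
      · rw [hv, List.replicate_succ', ← List.append_assoc]
      · simp only [hk]; push_cast; ring
    case dead.a =>
      have hd : dstep i (Ph.dead, k) Γ5.a = (Ph.dead, k + 0) := rfl
      rw [hd]
      exact ⟨by simp, by simp, by simp, by simp, by simp, by simp, by simp⟩
    case dead.b =>
      have hd : dstep i (Ph.dead, k) Γ5.b = (Ph.dead, k + 0) := rfl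
      rw [hd]
      exact ⟨by simp, by simp, by simp, by simp, by simp, by simp, by simp⟩
    case dead.c =>
      have hd : dstep i (Ph.dead, k) Γ5.c = (Ph.dead, k + 0) := rfl
      rw [hd]
      exact ⟨by simp, by simp, by simp, by simp, by simp, by simp, by simp⟩
    case dead.d =>
      have hd : dstep i (Ph.dead, k) Γ5.d = (Ph.dead, k + 0) := rfl
      rw [hd]
      exact ⟨by simp, by simp, by simp, by simp, by simp, by simp, by simp⟩
    case dead.e =>
      have hd : dstep i (Ph.dead, k) Γ5.e = (Ph.dead, k + 0) := rfl
      rw [hd]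
      exact ⟨by simp, by simp, by simp, by simp, by simp, by simp, by simp⟩
    case acc.a =>
      have hd : dstep i (Ph.acc, k) Γ5.a = (Ph.dead, k + 0) := rfl
      rw [hd]
      exact ⟨by simp, by simp, by simp, by simp, by simp, by simp, by simp⟩
    case acc.b =>
      have hd : dstep i (Ph.acc, k) Γ5.b = (Ph.dead, k + 0) := rfl
      rw [hd]
      exact ⟨by simp, by simp, by simp, by simp, by simp, by simp, by simp⟩
    case acc.c =>
      have hd : dstep i (Ph.acc, k) Γ5.c = (Ph.dead, k + 0) := rfl
      rw [hd]
      exact ⟨by simp, by simp, by simp, by simp, by simp, by simp, by simp⟩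
    case acc.d =>
      have hd : dstep i (Ph.acc, k) Γ5.d = (Ph.dead, k + 0) := rfl
      rw [hd]
      exact ⟨by simp, by simp, by simp, by simp, by simp, by simp, by simp⟩
    case acc.e =>
      have hd : dstep i (Ph.acc, k) Γ5.e = (Ph.dead, k + 0) := rfl
      rw [hd]
      exact ⟨by simp, by simp, by simp, by simp, by simp, by simp, by simp⟩


lemma runL_ab (i : Fin 3) (w : List Γ5) (h : overAB w) :
    (runL i w).1 = Ph.start ∨ (runL i w).1 = Ph.sA ∨ (runL i w).1 = Ph.sB ∨ (runL i w).1 = Ph.fail := by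
  induction w using List.reverseRecOn with
  | nil => left; rfl
  | append_singleton v x ih =>
    have hv : overAB v := fun y hy => h y (List.mem_append.mpr (Or.inl hy))
    have hx : x = Γ5.a ∨ x = Γ5.b := h x (List.mem_append.mpr (Or.inr (by simp)))
    have hrun : runL i (v ++ [x]) = dstep i (runL i v) x := by
      rw [runL, runF, List.foldl_append]; rfl
    rcases hs : runL i v with ⟨s, k⟩
    rw [hs] at hrun
    rw [hrun]
    have ih' := ih hv
    rw [hs] at ih'
    simp only at ih'
    rcases hx with rfl | rfl <;> rcases ih' with h1 | h1 | h1 | h1 <;> subst h1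
    · right; left; rfl
    · right; left; rfl
    · by_cases hk : k = 0
      · subst hk; right; left; rfl
      · have hz : decide (k = 0) = false := decide_eq_false hk
        right; right; right; simp [dstep, g, hz]
    · right; right; right; rfl
    · right; right; right; rfl
    · right; right; left; rfl
    · by_cases hk : k = 0
      · subst hk; right; right; right; rfl
      · have hz : decide (k = 0) = false := decide_eq_false hk
        right; right; left; simp [dstep, g, hz]
    · right; right; right; rfl

lemma K1 (w : List Γ5) (hw : w ∈ coEQstar) (i : Fin 3) : endPh i w = Ph.acc := by
  obtain ⟨hab, hnot⟩ := hw
  have hinv := invariant i w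
  unfold RInv at hinv
  obtain ⟨i1, i2, i3, i4, i5, i6, i7⟩ := hinv
  rcases runL_ab i w hab with h | h | h | h <;> unfold endPh <;> rw [h]
  · rfl
  · rfl
  · have hk : (runL i w).2 ≠ 0 := by
      intro hk0
      obtain ⟨-, p, n, j, hp, hj, hjn, hv, hkk⟩ := i3 h
      have hjn' : j = n := by omega
      subst hjn'
      exact hnot (hv ▸ kstar_append_block p hp j hj)
    rw [decide_eq_false hk]
    rfl
  · rfl

lemma run_cde (i : Fin 3) (n : ℕ) (hn : 0 < n) :
    runL i (List.replicate n Γ5.c ++ List.replicate n Γ5.d ++ List.replicate n Γ5.e)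
      = (Ph.sE, n * wC i + n * wD i + n * wE i) := by
  obtain ⟨m, rfl⟩ : ∃ m, n = m + 1 := ⟨n - 1, by omega⟩
  rw [runL, runF_append, runF_append]
  have h1 : runF i (Ph.start, 0) (List.replicate (m+1) Γ5.c) = (Ph.sC, (m+1 : ℕ) * wC i) := by
    rw [List.replicate_succ]
    show runF i (dstep i (Ph.start, 0) Γ5.c) (List.replicate m Γ5.c) = _
    have hd : dstep i (Ph.start, 0) Γ5.c = (Ph.sC, 0 + wC i) := rfl
    rw [hd, runF_rep_loop i Ph.sC Γ5.c (wC i) (fun z => rfl) m (0 + wC i)]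
    congr 1
    push_cast; ring
  rw [h1]
  have h2 : runF i (Ph.sC, (m+1:ℕ) * wC i) (List.replicate (m+1) Γ5.d)
      = (Ph.sD, (m+1:ℕ) * wC i + (m+1:ℕ) * wD i) := by
    rw [List.replicate_succ]
    show runF i (dstep i (Ph.sC, (m+1:ℕ) * wC i) Γ5.d) (List.replicate m Γ5.d) = _
    have hd : dstep i (Ph.sC, (m+1:ℕ) * wC i) Γ5.d = (Ph.sD, (m+1:ℕ) * wC i + wD i) := rfl
    rw [hd, runF_rep_loop i Ph.sD Γ5.d (wD i) (fun z => rfl) m _]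
    congr 1
    push_cast; ring
  rw [h2]
  rw [List.replicate_succ]
  show runF i (dstep i (Ph.sD, (m+1:ℕ) * wC i + (m+1:ℕ) * wD i) Γ5.e) (List.replicate m Γ5.e) = _
  have hd : dstep i (Ph.sD, (m+1:ℕ) * wC i + (m+1:ℕ) * wD i) Γ5.e
      = (Ph.sE, ((m+1:ℕ) * wC i + (m+1:ℕ) * wD i) + wE i) := rfl
  rw [hd, runF_rep_loop i Ph.sE Γ5.e (wE i) (fun z => rfl) m _]
  congr 1
  push_cast; ring

lemma K2 (w : List Γ5) (hw : w ∈ EQ3) (i : Fin 3) : endPh i w = Ph.acc := by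
  obtain ⟨n, rfl⟩ := hw
  by_cases hn : n = 0
  · subst hn; rfl
  · unfold endPh
    rw [run_cde i n (by omega)]
    have hzero : (n:ℤ) * wC i + n * wD i + n * wE i = 0 := by
      fin_cases i <;> simp [wC, wD, wE] <;> ring
    simp only [hzero]
    rfl


lemma atmost (w : List Γ5) (hw : w ∉ LangL) (i : Fin 3) (hacc : endPh i w = Ph.acc) :
    ∃ n m l : ℕ, w = List.replicate n Γ5.c ++ List.replicate m Γ5.d ++ List.replicate l Γ5.e ∧
      (n:ℤ) * wC i + m * wD i + l * wE i = 0 := by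
  have hinv := invariant i w
  unfold RInv at hinv
  obtain ⟨i1, i2, i3, i4, i5, i6, i7⟩ := hinv
  have hne3 : w ∉ EQ3 := fun h => hw (Or.inr h)
  have hnco : w ∉ coEQstar := fun h => hw (Or.inl h)
  unfold endPh at hacc
  rcases hs : (runL i w).1 with _ | _ | _ | _ | _ | _ | _ | _ | _ <;> rw [hs] at hacc
  -- start
  · obtain ⟨hnil, -⟩ := i1 hs
    exact absurd ⟨0, by simp [hnil]⟩ hne3
  -- sA
  · obtain ⟨hab, p, n, hp, hn, hv, -⟩ := i2 hs
    exfalso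
    apply hnco
    refine ⟨hab, fun hmem => ?_⟩
    rcases run_kstar i w hmem with ⟨-, hrr⟩ | ⟨-, hrr⟩ <;> rw [hrr] at hs <;> simp at hs
  -- sB
  · by_cases hk : (runL i w).2 = 0
    · rw [decide_eq_true hk] at hacc
      exact absurd hacc (by simp [gd])
    · obtain ⟨hab, p, n, j, hp, hj, hjn, hv, hkk⟩ := i3 hs
      exfalso
      apply hnco
      refine ⟨hab, fun hmem => ?_⟩
      rcases run_kstar i w hmem with ⟨-, hrr⟩ | ⟨-, hrr⟩
      · rw [hrr] at hs; simp at hs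
      · rw [hrr] at hk; simp at hk
  -- fail
  · have hab := i4 hs
    exfalso
    apply hnco
    refine ⟨hab, fun hmem => ?_⟩
    rcases run_kstar i w hmem with ⟨-, hrr⟩ | ⟨-, hrr⟩ <;> rw [hrr] at hs <;> simp at hs
  -- sC
  · by_cases hk : (runL i w).2 = 0
    · obtain ⟨n, hn, hv, hkk⟩ := i5 hs
      refine ⟨n, 0, 0, by simp [hv], ?_⟩
      simp only [Nat.cast_zero, zero_mul, add_zero]
      rw [← hkk]; exact hk
    · rw [decide_eq_false hk] at hacc
      exact absurd hacc (by simp [gd])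
  -- sD
  · by_cases hk : (runL i w).2 = 0
    · obtain ⟨n, m, hm, hv, hkk⟩ := i6 hs
      refine ⟨n, m, 0, by simp [hv], ?_⟩
      simp only [Nat.cast_zero, zero_mul, add_zero]
      rw [← hkk]; exact hk
    · rw [decide_eq_false hk] at hacc
      exact absurd hacc (by simp [gd])
  -- sE
  · by_cases hk : (runL i w).2 = 0
    · obtain ⟨n, m, l, hl, hv, hkk⟩ := i7 hs
      refine ⟨n, m, l, by simp [hv], ?_⟩
      rw [← hkk]; exact hk
    · rw [decide_eq_false hk] at hacc
      exact absurd hacc (by simp [gd])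
  -- dead
  · exact absurd hacc (by simp [gd])
  -- acc
  · exact absurd hacc (by simp [gd])

lemma rep_counts (n m l : ℕ) :
    (List.replicate n Γ5.c ++ List.replicate m Γ5.d ++ List.replicate l Γ5.e).count Γ5.c = n ∧
    (List.replicate n Γ5.c ++ List.replicate m Γ5.d ++ List.replicate l Γ5.e).count Γ5.d = m ∧
    (List.replicate n Γ5.c ++ List.replicate m Γ5.d ++ List.replicate l Γ5.e).count Γ5.e = l := by
  refine ⟨?_, ?_, ?_⟩ <;> simp [List.count_append, List.count_replicate]

lemma two_acc (w : List Γ5) (hw : w ∉ LangL) (i j : Fin 3) (hij : i ≠ j)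
    (hi : endPh i w = Ph.acc) (hj : endPh j w = Ph.acc) : False := by
  obtain ⟨n, m, l, hrep, heq⟩ := atmost w hw i hi
  obtain ⟨n', m', l', hrep', heq'⟩ := atmost w hw j hj
  have hcount := rep_counts n m l
  have hcount' := rep_counts n' m' l'
  rw [← hrep] at hcount
  rw [← hrep'] at hcount'
  obtain ⟨hc1, hc2, hc3⟩ := hcount
  obtain ⟨hc1', hc2', hc3'⟩ := hcount'
  have hn : n' = n := by omega
  have hm : m' = m := by omega
  have hl : l' = l := by omega
  rw [hn, hm, hl] at heq'
  have hall : n = m ∧ m = l := by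
    fin_cases i <;> fin_cases j <;> simp_all [wC, wD, wE] <;> omega
  obtain ⟨h1, h2⟩ := hall
  refine hw (Or.inr ⟨n, ?_⟩)
  rw [hrep, h1, h2]


/-- some 1P1CA recognizes `L = (complement of EQ* within {a,b}*) ∪ EQ³`
with negative one-sided error bound `ε < 1/2`. -/
theorem stmt15 : ∃ ε : ℝ, ε < 1 / 2 ∧ ∃ M : OneP1CA Γ5,
    (∀ w ∈ LangL, M.accProb w = 1) ∧ (∀ w ∉ LangL, M.accProb w ≤ ε) := by
  refine ⟨1/3, by norm_num, MM, ?_, ?_⟩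
  · intro w hw
    have h : ∀ i : Fin 3, endPh i w = Ph.acc := by
      intro i
      rcases hw with h | h
      · exact K1 w h i
      · exact K2 w h i
    rw [accProb_eq, if_pos (h 0), if_pos (h 1), if_pos (h 2)]
    norm_num
  · intro w hw
    rw [accProb_eq]
    by_cases h0 : endPh 0 w = Ph.acc <;> by_cases h1 : endPh 1 w = Ph.acc <;>
      by_cases h2 : endPh 2 w = Ph.acc
    · exact (two_acc w hw 0 1 (by decide) h0 h1).elim
    · exact (two_acc w hw 0 1 (by decide) h0 h1).elim
    · exact (two_acc w hw 0 2 (by decide) h0 h2).elim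
    · rw [if_pos h0, if_neg h1, if_neg h2]; norm_num
    · exact (two_acc w hw 1 2 (by decide) h1 h2).elim
    · rw [if_neg h0, if_pos h1, if_neg h2]; norm_num
    · rw [if_neg h0, if_neg h1, if_pos h2]; norm_num
    · rw [if_neg h0, if_neg h1, if_neg h2]; norm_num
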